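/- arXiv:1902.01795 — 2 statements merged into one kernel-verified Lean document; each statement's English description precedes it below -/
import Mathlib

section
/- Deodhar's Property Z: in a Coxeter group, if s is a simple reflection and w, y are elements with sw > w and sy > y, then the following are equivalent: y ≤ w, y ≤ sw, and sy ≤ sw (in the Bruhat order). -/
/-- Bruhat order on a Coxeter group, via the subword characterization: `y ≤ w` iff some
reduced word for `w` has a subword whose product is `y`. -/
def CoxeterSystem.bruhatLE {B W : Type*} [Group W] {M : CoxeterMatrix B}
    (cs : CoxeterSystem M W) (y w : W) : Prop :=
  ∃ l : List B, cs.IsReduced l ∧ cs.wordProd l = w ∧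
    ∃ l' : List B, l'.Sublist l ∧ cs.wordProd l' = y

/-!
The subword order coincides with the order generated by the steps `u < u t` with `t` a reflection
and `ℓ u < ℓ (u t)`. The comparison rests on the strong exchange property: if `ℓ (w t) < ℓ w`, then
`w t` is obtained from any word for `w` by deleting one letter. It comes from Tits' action of `W`
on `W × ZMod 2`, whose second coordinate records the parity of the number of occurrences of a
reflection in the right inversion sequence of a word; this parity therefore depends only on the
product of the word. For the chain order, the lifting property (if `u ≤ w` and `su > u`, then
`su ≤ sw` when `sw > w`, and `su ≤ w`, `u ≤ sw` when `sw < w`) follows by induction on the chain,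
and Property Z is read off from it.
-/

theorem conj_eq_iff_eq_conj {G : Type*} [Group G] (g t x : G) :
    g * t * g⁻¹ = x ↔ t = g⁻¹ * x * g := by
  constructor <;> rintro rfl <;> group

namespace CoxeterSystem

open List

variable {B W : Type*} [Group W] {M : CoxeterMatrix B} (cs : CoxeterSystem M W)

local prefix:100 "s " => cs.simple
local prefix:100 "π " => cs.wordProd
local prefix:100 "ℓ " => cs.length
local prefix:100 "ris " => cs.rightInvSeq

section TitsRepresentation

variable [DecidableEq W]

def reflFlip (i : B) (p : W × ZMod 2) : W × ZMod 2 :=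
  (s i * p.1 * s i, p.2 + if p.1 = s i then 1 else 0)

theorem reflFlip_involutive (i : B) : Function.Involutive (cs.reflFlip i) := by
  rintro ⟨t, z⟩
  have hconj : s i * (s i * t * s i) * s i = t := by
    simp only [← mul_assoc, cs.simple_mul_simple_self, one_mul, cs.simple_mul_simple_cancel_right]
  have hcond : (s i * t * s i = s i) ↔ t = s i := by
    simpa [cs.inv_simple] using conj_eq_iff_eq_conj (s i) t (s i)
  simp only [reflFlip, hconj, hcond, add_assoc, CharTwo.add_self_eq_zero, add_zero]

def reflPerm (i : B) : Equiv.Perm (W × ZMod 2) := (cs.reflFlip_involutive i).toPerm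

theorem reflPerm_apply (i : B) (t : W) (z : ZMod 2) :
    cs.reflPerm i (t, z) = (s i * t * s i, z + if t = s i then 1 else 0) := rfl

theorem reflPerm_mul_reflPerm_apply (i j : B) (t : W) (z : ZMod 2) :
    (cs.reflPerm i * cs.reflPerm j) (t, z) =
      (s i * s j * t * (s i * s j)⁻¹,
        z + ((if t = s j then 1 else 0) + if t = s j * s i * s j then 1 else 0)) := by
  have hcond : (s j * t * s j = s i) ↔ t = s j * s i * s j := by
    simpa [cs.inv_simple] using conj_eq_iff_eq_conj (s j) t (s i)
  rw [Equiv.Perm.mul_apply, reflPerm_apply, reflPerm_apply]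
  simp only [hcond]
  simp only [mul_inv_rev, cs.inv_simple, mul_assoc, add_assoc]

theorem reflPerm_mul_reflPerm_pow_apply (i j : B) (k : ℕ) (t : W) (z : ZMod 2) :
    ((cs.reflPerm i * cs.reflPerm j) ^ k) (t, z) =
      ((s i * s j) ^ k * t * ((s i * s j) ^ k)⁻¹,
        z + ∑ e ∈ Finset.range (2 * k), if t = (s j * s i) ^ e * s j then 1 else 0) := by
  induction k generalizing t z with
  | zero => simp
  | succ k ih =>
    have hρ : (s i * s j)⁻¹ = s j * s i := by simp [cs.inv_simple]
    have hcond (e : ℕ) : (s i * s j * t * (s i * s j)⁻¹ = (s j * s i) ^ e * s j) ↔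
        t = (s j * s i) ^ (e + 2) * s j := by
      rw [conj_eq_iff_eq_conj, hρ, pow_succ, pow_succ']
      simp only [mul_assoc]
    rw [pow_succ, Equiv.Perm.mul_apply, reflPerm_mul_reflPerm_apply, ih]
    simp only [hcond, Nat.mul_succ, Finset.sum_range_succ', pow_zero, one_mul, zero_add, pow_one]
    refine Prod.ext (by simp only [pow_succ, mul_inv_rev, mul_assoc]) ?_
    ring

theorem isLiftable_reflPerm : M.IsLiftable cs.reflPerm := by
  intro i j
  ext ⟨t, z⟩ : 1
  -- the summand is periodic of period `M i j` in `e`, so the sum over two periods vanishes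
  have hperiodic : (∑ e ∈ Finset.range (2 * M i j),
      if t = (s j * s i) ^ e * s j then (1 : ZMod 2) else 0) = 0 := by
    rw [two_mul, Finset.sum_range_add]
    simp only [pow_add, cs.simple_mul_simple_pow', one_mul]
    exact CharTwo.add_self_eq_zero _
  rw [reflPerm_mul_reflPerm_pow_apply, cs.simple_mul_simple_pow, hperiodic]
  simp

def titsRep : W →* Equiv.Perm (W × ZMod 2) := cs.lift ⟨cs.reflPerm, cs.isLiftable_reflPerm⟩

theorem titsRep_simple (i : B) : cs.titsRep (s i) = cs.reflPerm i :=
  cs.lift_apply_simple cs.isLiftable_reflPerm i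

theorem titsRep_wordProd_apply (ω : List B) (t : W) (z : ZMod 2) :
    cs.titsRep (π ω) (t, z) = (π ω * t * (π ω)⁻¹, z + (ris ω).count t) := by
  induction ω generalizing t z with
  | nil => simp [rightInvSeq]
  | cons i ω ih =>
    have hcond : (π ω * t * (π ω)⁻¹ = s i) ↔ ((π ω)⁻¹ * s i * π ω = t) := by
      rw [conj_eq_iff_eq_conj, eq_comm]
    rw [cs.wordProd_cons, map_mul, Equiv.Perm.mul_apply, ih, titsRep_simple, reflPerm_apply]
    simp only [hcond, rightInvSeq, List.count_cons, beq_iff_eq]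
    refine Prod.ext (by simp only [mul_inv_rev, cs.inv_simple, mul_assoc]) ?_
    push_cast
    ring

def reflCocycle (w t : W) : ZMod 2 := (cs.titsRep w (t, 0)).2

theorem titsRep_apply (w t : W) (z : ZMod 2) :
    cs.titsRep w (t, z) = (w * t * w⁻¹, z + cs.reflCocycle w t) := by
  obtain ⟨ω, rfl⟩ := cs.wordProd_surjective w
  simp only [reflCocycle, titsRep_wordProd_apply, zero_add]

theorem reflCocycle_wordProd (ω : List B) (t : W) :
    cs.reflCocycle (π ω) t = (ris ω).count t := by
  simp only [reflCocycle, titsRep_wordProd_apply, zero_add]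

theorem reflCocycle_mul (g h t : W) :
    cs.reflCocycle (g * h) t = cs.reflCocycle h t + cs.reflCocycle g (h * t * h⁻¹) := by
  have happly := cs.titsRep_apply (g * h) t 0
  rw [map_mul, Equiv.Perm.mul_apply, titsRep_apply, titsRep_apply, Prod.mk.injEq] at happly
  linear_combination -happly.2

theorem reflCocycle_self_of_isReflection {t : W} (ht : cs.IsReflection t) :
    cs.reflCocycle t t = 1 := by
  obtain ⟨w, i, rfl⟩ := ht
  have hconj : w⁻¹ * (w * s i * w⁻¹) * w⁻¹⁻¹ = s i := by group
  have hcancel : cs.reflCocycle (w * w⁻¹) (w * s i * w⁻¹) = 0 := by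
    simp [reflCocycle]
  have hsimple : cs.reflCocycle (s i) (s i) = 1 := by
    simp [reflCocycle, titsRep_simple, reflPerm_apply]
  rw [reflCocycle_mul, hconj] at hcancel
  rw [reflCocycle_mul, reflCocycle_mul, hconj, hsimple, mul_inv_cancel_right]
  linear_combination hcancel

theorem mem_rightInvSeq_of_isRightInversion {ω : List B} {t : W}
    (ht : cs.IsRightInversion (π ω) t) : t ∈ ris ω := by
  obtain ⟨μ, hμ, hμω⟩ := cs.exists_isReduced (π ω * t)
  have hcount : ((ris μ).count t : ZMod 2) = 1 + (ris ω).count t := by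
    rw [← reflCocycle_wordProd, ← reflCocycle_wordProd, ← hμω, reflCocycle_mul,
      reflCocycle_self_of_isReflection cs ht.1, ht.1.mul_self, one_mul, ht.1.inv]
  by_contra hnot
  rw [List.count_eq_zero.mpr hnot, Nat.cast_zero, add_zero] at hcount
  have hmem : t ∈ ris μ := List.count_pos_iff.mp (Nat.pos_of_ne_zero fun h => by simp [h] at hcount)
  have hlt := (cs.isRightInversion_of_mem_rightInvSeq hμ hmem).2
  rw [← hμω, mul_assoc, ht.1.mul_self, mul_one] at hlt
  exact lt_asymm ht.2 hlt

end TitsRepresentation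

theorem exists_eraseIdx_wordProd_eq_mul {ω : List B} {t : W} (ht : cs.IsRightInversion (π ω) t) :
    ∃ j < ω.length, π (ω.eraseIdx j) = π ω * t := by
  classical
  obtain ⟨j, hj, rfl⟩ := List.mem_iff_getElem.mp (cs.mem_rightInvSeq_of_isRightInversion ht)
  refine ⟨j, by simpa using hj, ?_⟩
  rw [← wordProd_mul_getD_rightInvSeq, List.getD_eq_getElem _ _ hj]

theorem length_wordProd_lt_of_isReduced_cons {i : B} {ω : List B} (h : cs.IsReduced (i :: ω)) :
    ℓ (π ω) < ℓ (s i * π ω) := by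
  have hlen : ℓ (s i * π ω) = ω.length + 1 := by rw [← wordProd_cons]; exact h
  have := cs.length_wordProd_le ω
  omega

def BruhatStep (u w : W) : Prop := ℓ u < ℓ w ∧ cs.IsReflection (u⁻¹ * w)

def BruhatChain : W → W → Prop := Relation.ReflTransGen cs.BruhatStep

variable {cs}

theorem bruhatStep_mul_left {u t : W} (ht : cs.IsReflection t) (h : ℓ u < ℓ (t * u)) :
    cs.BruhatStep u (t * u) :=
  ⟨h, by simpa [mul_assoc] using ht.conj u⁻¹⟩

theorem bruhatChain_simple_mul {u : W} {i : B} (h : ℓ u < ℓ (s i * u)) :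
    cs.BruhatChain u (s i * u) :=
  .single (bruhatStep_mul_left (cs.isReflection_simple i) h)

theorem bruhatChain_of_simple_mul {w : W} {i : B} (h : ℓ (s i * w) < ℓ w) :
    cs.BruhatChain (s i * w) w := by
  have := bruhatChain_simple_mul (u := s i * w) (i := i) (by rwa [cs.simple_mul_simple_cancel_left])
  rwa [cs.simple_mul_simple_cancel_left] at this

theorem BruhatStep.mul_inv_mul_eq {u w : W} (h : cs.BruhatStep u w) : w * (u⁻¹ * w) = u :=
  calc w * (u⁻¹ * w) = u * ((u⁻¹ * w) * (u⁻¹ * w)) := by group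
    _ = u := by rw [h.2.mul_self, mul_one]

theorem BruhatStep.isRightInversion {u w : W} (h : cs.BruhatStep u w) :
    cs.IsRightInversion w (u⁻¹ * w) :=
  ⟨h.2, by rw [h.mul_inv_mul_eq]; exact h.1⟩

theorem BruhatStep.simple_mul_simple_mul_of_length_lt {u w : W} (h : cs.BruhatStep u w) {i : B}
    (hlt : ℓ (s i * u) < ℓ (s i * w)) : cs.BruhatStep (s i * u) (s i * w) :=
  ⟨hlt, by simpa [mul_assoc] using h.2⟩

theorem BruhatStep.simple_mul_simple_mul {u w : W} (h : cs.BruhatStep u w) (i : B)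
    (hiff : ℓ u < ℓ (s i * u) ↔ ℓ w < ℓ (s i * w)) : cs.BruhatStep (s i * u) (s i * w) := by
  refine h.simple_mul_simple_mul_of_length_lt ?_
  have := h.1
  rcases cs.length_simple_mul u i with hu | hu <;> rcases cs.length_simple_mul w i with hw | hw <;>
    omega

theorem BruhatStep.length_simple_mul_lt_or_simple_mul_eq {u w : W} (h : cs.BruhatStep u w)
    (i : B) : ℓ (s i * u) < ℓ (s i * w) ∨ s i * u = w := by
  obtain ⟨μ, hμ, hμw⟩ := cs.exists_isReduced (s i * w)
  have hwμ : π (i :: μ) = w := by rw [wordProd_cons, ← hμw, cs.simple_mul_simple_cancel_left]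
  have hwinv := h.isRightInversion
  rw [← hwμ] at hwinv
  obtain ⟨j, hj, hu⟩ := cs.exists_eraseIdx_wordProd_eq_mul hwinv
  rw [hwμ, h.mul_inv_mul_eq] at hu
  have hlen : ℓ (s i * w) = μ.length := by rw [hμw]; exact hμ
  cases j with
  | zero =>
    right
    rw [← hu, List.eraseIdx_cons_zero, ← hμw, cs.simple_mul_simple_cancel_left]
  | succ k =>
    left
    rw [List.eraseIdx_cons_succ, wordProd_cons] at hu
    have hk : k < μ.length := by simpa using hj
    rw [← hu, cs.simple_mul_simple_cancel_left, hlen]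
    calc ℓ (π (μ.eraseIdx k)) ≤ (μ.eraseIdx k).length := cs.length_wordProd_le _
      _ < μ.length := by rw [← List.length_eraseIdx_add_one hk]; exact Nat.lt_add_one _

theorem BruhatStep.bruhatChain_of_ascent_of_descent {u w : W} (h : cs.BruhatStep u w) {i : B}
    (hu : ℓ u < ℓ (s i * u)) (hw : ℓ (s i * w) < ℓ w) :
    cs.BruhatChain (s i * u) w ∧ cs.BruhatChain u (s i * w) := by
  rcases h.length_simple_mul_lt_or_simple_mul_eq i with hlt | heq
  · have hstep := h.simple_mul_simple_mul_of_length_lt hlt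
    exact ⟨(Relation.ReflTransGen.single hstep).trans (bruhatChain_of_simple_mul hw),
      (bruhatChain_simple_mul hu).tail hstep⟩
  · have hu' : u = s i * w := by rw [← heq, cs.simple_mul_simple_cancel_left]
    exact ⟨heq ▸ .refl, hu' ▸ .refl⟩

theorem BruhatChain.lift {u w : W} (h : cs.BruhatChain u w) {i : B} (hu : ℓ u < ℓ (s i * u)) :
    (ℓ w < ℓ (s i * w) → cs.BruhatChain (s i * u) (s i * w)) ∧
    (ℓ (s i * w) < ℓ w → cs.BruhatChain (s i * u) w ∧ cs.BruhatChain u (s i * w)) := by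
  induction h with
  | refl => exact ⟨fun _ => .refl, fun hw => absurd hu (lt_asymm hw)⟩
  | @tail v w huv hstep ih =>
    rcases (cs.length_simple_mul_ne v i).lt_or_gt with hv | hv
    · obtain ⟨hsuv, husv⟩ := ih.2 hv
      refine ⟨fun hw => (hsuv.tail hstep).trans (bruhatChain_simple_mul hw), fun hw => ?_⟩
      exact ⟨hsuv.tail hstep, husv.tail (hstep.simple_mul_simple_mul i (by omega))⟩
    · have hsuv := ih.1 hv
      refine ⟨fun hw => hsuv.tail (hstep.simple_mul_simple_mul i (by omega)), fun hw => ?_⟩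
      obtain ⟨hsvw, hvsw⟩ := hstep.bruhatChain_of_ascent_of_descent hv hw
      exact ⟨hsuv.trans hsvw, huv.trans hvsw⟩

theorem bruhatChain_wordProd_of_sublist {ω' ω : List B} (h : ω' <+ ω) (hω : cs.IsReduced ω) :
    cs.BruhatChain (π ω') (π ω) := by
  induction h with
  | slnil => exact .refl
  | @cons ω' ω i _ ih =>
    have hred : cs.IsReduced ω := by simpa using hω.drop 1
    rw [wordProd_cons]
    exact (ih hred).trans (bruhatChain_simple_mul (length_wordProd_lt_of_isReduced_cons cs hω))
  | @cons_cons ω' ω i _ ih =>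
    have hred : cs.IsReduced ω := by simpa using hω.drop 1
    have hω_asc := length_wordProd_lt_of_isReduced_cons cs hω
    rw [wordProd_cons, wordProd_cons]
    rcases (cs.length_simple_mul_ne (π ω') i).lt_or_gt with hω'_desc | hω'_asc
    · exact (bruhatChain_of_simple_mul hω'_desc).trans
        ((ih hred).trans (bruhatChain_simple_mul hω_asc))
    · exact ((ih hred).lift hω'_asc).1 hω_asc

theorem exists_sublist_wordProd_eq_of_bruhatChain {u w : W} (h : cs.BruhatChain u w)
    {ω : List B} (hω : π ω = w) : ∃ ω', ω' <+ ω ∧ π ω' = u := by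
  induction h generalizing ω with
  | refl => exact ⟨ω, .refl ω, hω⟩
  | @tail v w _ hstep ih =>
    have hinv := hstep.isRightInversion
    rw [← hω] at hinv
    obtain ⟨j, -, hj⟩ := cs.exists_eraseIdx_wordProd_eq_mul hinv
    rw [hω, hstep.mul_inv_mul_eq] at hj
    obtain ⟨ω', hsub, hω'⟩ := ih hj
    exact ⟨ω', hsub.trans (ω.eraseIdx_sublist j), hω'⟩

theorem bruhatLE_iff_bruhatChain {u w : W} : cs.bruhatLE u w ↔ cs.BruhatChain u w := by
  constructor
  · rintro ⟨ω, hω, rfl, ω', hsub, rfl⟩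
    exact bruhatChain_wordProd_of_sublist hsub hω
  · intro h
    obtain ⟨ω, hω, rfl⟩ := cs.exists_isReduced w
    obtain ⟨ω', hsub, rfl⟩ := exists_sublist_wordProd_eq_of_bruhatChain h rfl
    exact ⟨ω, hω, rfl, ω', hsub, rfl⟩

end CoxeterSystem

/-- Deodhar's Property Z: in a Coxeter group, if `s` is a simple reflection and `w, y`
are elements with `sw > w` and `sy > y`, then the following are equivalent:
`y ≤ w`, `y ≤ sw`, and `sy ≤ sw` (in the Bruhat order). -/
theorem deodhar_property_Z {B W : Type*} [Group W] {M : CoxeterMatrix B}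
    (cs : CoxeterSystem M W) (i : B) (w y : W)
    (hw : cs.length w < cs.length (cs.simple i * w))
    (hy : cs.length y < cs.length (cs.simple i * y)) :
    (cs.bruhatLE y w ↔ cs.bruhatLE y (cs.simple i * w)) ∧
    (cs.bruhatLE y (cs.simple i * w) ↔ cs.bruhatLE (cs.simple i * y) (cs.simple i * w)) := by
  simp only [CoxeterSystem.bruhatLE_iff_bruhatChain]
  have hsw : cs.length (cs.simple i * (cs.simple i * w)) < cs.length (cs.simple i * w) := by
    rwa [cs.simple_mul_simple_cancel_left]
  refine ⟨⟨fun h => h.trans (CoxeterSystem.bruhatChain_simple_mul hw), fun h => ?_⟩,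
    ⟨fun h => ((h.lift hy).2 hsw).1, fun h => (CoxeterSystem.bruhatChain_simple_mul hy).trans h⟩⟩
  simpa only [cs.simple_mul_simple_cancel_left] using ((h.lift hy).2 hsw).2
end

section
/- In any state of the colored five-vertex model, the coloring of a state is uniquely determined by the uncolored state: given an admissible uncolored state with prescribed colors on the top boundary − spins, there is exactly one way to assign colors to all interior − spins consistent with the admissible colored vertex configurations. Consequently the uncolored ensemble decomposes as a disjoint union of the colored ensembles over w ∈ S_r, and Z(S_{z,λ}) = Σ_{w ∈ S_r} Z(S_{z,λ,w}). -/
abbrev LP (r : ℕ) := AddMonoidAlgebra ℚ (Fin r → ℤ)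

noncomputable def mono {r : ℕ} (μ : Fin r → ℤ) : LP r := AddMonoidAlgebra.single μ (1 : ℚ)

/-- The simple reflection `s_i` of `S_r`, swapping `i` and `i+1` (0-based). -/
def sPerm (r i : ℕ) : Equiv.Perm (Fin r) :=
  if h : i + 1 < r then Equiv.swap ⟨i, Nat.lt_of_succ_lt h⟩ ⟨i + 1, h⟩ else 1

/-- The simple root `α_i = e_i - e_{i+1}`. -/
def alph (r i : ℕ) : Fin r → ℤ :=
  if h : i + 1 < r then Pi.single ⟨i, Nat.lt_of_succ_lt h⟩ 1 - Pi.single ⟨i + 1, h⟩ 1 else 0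

/-- The pairing `⟨μ, α_i^∨⟩ = μ_i - μ_{i+1}`. -/
def pair (r i : ℕ) (μ : Fin r → ℤ) : ℤ :=
  if h : i + 1 < r then μ ⟨i, Nat.lt_of_succ_lt h⟩ - μ ⟨i + 1, h⟩ else 0

/-- The isobaric Demazure operator `∂_i` on the monomial `z^μ`, given by the standard
explicit formula equivalent to `∂_i f(z) = (f(z) - z^{-α_i} f(s_i z))/(1 - z^{-α_i})`. -/
noncomputable def demMono (r i : ℕ) (μ : Fin r → ℤ) : LP r :=
  if 0 ≤ pair r i μ then ∑ t ∈ Finset.range ((pair r i μ).toNat + 1), mono (μ - t • alph r i)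
  else if pair r i μ = -1 then 0
  else -∑ t ∈ Finset.range ((-pair r i μ).toNat - 1), mono (μ + (t + 1) • alph r i)

/-- The isobaric Demazure operator `∂_i` on Laurent polynomials, extended linearly. -/
noncomputable def dem (r i : ℕ) (f : LP r) : LP r :=
  Finsupp.sum f.coeff fun μ c => c • demMono r i μ

/-- The modified Demazure operator `∂°_i = ∂_i - 1`. -/
noncomputable def demC (r i : ℕ) (f : LP r) : LP r := dem r i f - f

/-- The action of `s_i` on Laurent polynomials: `(s_i f)(z) = f(s_i z)`. -/
noncomputable def sAct (r i : ℕ) (f : LP r) : LP r :=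
  AddMonoidAlgebra.mapDomain (fun μ => μ ∘ (sPerm r i)) f

/-- `∂_w = ∂_{i_1} ⋯ ∂_{i_k}` along a word `(i_1, …, i_k)`. -/
noncomputable def demWord (r : ℕ) : List ℕ → LP r → LP r
  | [], f => f
  | i :: l, f => dem r i (demWord r l f)

/-- `∂°_w = ∂°_{i_1} ⋯ ∂°_{i_k}` along a word `(i_1, …, i_k)`. -/
noncomputable def demCWord (r : ℕ) : List ℕ → LP r → LP r
  | [], f => f
  | i :: l, f => demC r i (demCWord r l f)

/-- All letters of the word are valid indices of simple reflections of `S_r`. -/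
def OKWord (r : ℕ) (l : List ℕ) : Prop := ∀ i ∈ l, i + 1 < r

def wordProd (r : ℕ) (l : List ℕ) : Equiv.Perm (Fin r) := (l.map (sPerm r)).prod

/-- Coxeter length of a permutation. -/
noncomputable def len (r : ℕ) (w : Equiv.Perm (Fin r)) : ℕ :=
  sInf {n | ∃ l : List ℕ, OKWord r l ∧ wordProd r l = w ∧ l.length = n}

/-- `l` is a reduced word. -/
def Reduced (r : ℕ) (l : List ℕ) : Prop :=
  OKWord r l ∧ l.length = len r (wordProd r l)

/-- Bruhat order on `S_r`, via the subword characterization. -/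
def bruhatLE (r : ℕ) (y w : Equiv.Perm (Fin r)) : Prop :=
  ∃ l : List ℕ, Reduced r l ∧ wordProd r l = w ∧
    ∃ l' : List ℕ, l'.Sublist l ∧ wordProd r l' = y

/-- The Young diagram of a partition `λ` with at most `r` parts. -/
noncomputable def lamDiag {r : ℕ} (lam : Fin r → ℕ)
    (h : (List.ofFn lam).Pairwise (· ≥ ·)) : YoungDiagram :=
  YoungDiagram.ofRowLens (List.ofFn lam) (List.sortedGE_iff_pairwise.mpr h)

/-- The number of entries `< m` in row `j` of the tableau `T`; since rows weakly
increase, this is the length of row `j` of the tableau obtained from `T` by deleting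
all entries `≥ m`. -/
def cntLt {μ : YoungDiagram} (T : SemistandardYoungTableau μ) (j m : ℕ) : ℕ :=
  ((Finset.range (μ.rowLen j)).filter (fun k => T j k < m)).card

/-- The weight of a tableau: `wtT T m` is the number of entries equal to `m`.
(Entries are 0-based: the letter `m ∈ {0, …, r-1}` corresponds to `m+1 ∈ {1, …, r}`.) -/
def wtT {μ : YoungDiagram} (T : SemistandardYoungTableau μ) (m : ℕ) : ℕ :=
  (μ.cells.filter (fun c => T c.1 c.2 = m)).card

/-- A Gelfand-Tsetlin pattern with `r` rows and top row `λ`: a triangular array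
`(a i j)`, rows `i = 0, …, r-1` (from the top), with `a i j` defined for
`i ≤ j ≤ r-1` (and normalized to `0` outside the triangle), top row `λ`, and the
interlacing inequalities `a i j ≥ a (i+1) (j+1) ≥ a i (j+1)`. -/
structure GTPattern (r : ℕ) (lam : Fin r → ℕ) where
  a : ℕ → ℕ → ℕ
  top : ∀ j : Fin r, a 0 (j : ℕ) = lam j
  interlace : ∀ i j : ℕ, i ≤ j → j + 1 < r →
    a (i + 1) (j + 1) ≤ a i j ∧ a i (j + 1) ≤ a (i + 1) (j + 1)
  outside : ∀ i j : ℕ, ¬(i ≤ j ∧ j < r) → a i j = 0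

/-- The sum of the `i`-th row of a Gelfand-Tsetlin pattern. -/
def GTPattern.rowSum {r : ℕ} {lam : Fin r → ℕ} (P : GTPattern r lam) (i : ℕ) : ℕ :=
  ∑ j ∈ Finset.Ico i r, P.a i j

/-- `true` = spin −, `false` = spin +.  The admissible five-vertex configurations
`(left, top, right, bottom)`: spin is conserved, and the type-`b₁` configuration
`(+,−,+,−)` is forbidden.  This leaves exactly the five configurations
`(+,+,+,+)`, `(−,−,−,−)`, `(−,+,−,+)`, `(−,+,+,−)`, `(+,−,−,+)`. -/
def admU (a b c d : Bool) : Prop :=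
  ((if a then 1 else 0) + (if b then 1 else 0) : ℕ)
      = (if c then 1 else 0) + (if d then 1 else 0) ∧
  ¬(a = false ∧ b = true ∧ c = false ∧ d = true)

/-- A state of the uncolored five-vertex model `S_{z,λ}`: a grid with rows
`0, …, r-1` (top to bottom) and columns labeled `0, …, N` from *right to left*.
`V i j` is the spin on the vertical edge in column (label) `j` between row `i-1`
and row `i` (`V 0` is the top boundary, `V r` the bottom); `H i k` is the spin on
the `k`-th horizontal edge of row `i`, counted from the left (`H i 0` is the left
boundary, `H i (N+1)` the right boundary).  The vertex of row `i` and column label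
`j` has left edge `H i (N-j)`, top edge `V i j`, right edge `H i (N-j+1)` and
bottom edge `V (i+1) j`.  Boundary conditions: the top boundary has `−` exactly in
the columns labeled `λ_i + r - 1 - i` (0-based `i`), the left and bottom boundary
are `+`, the right boundary is `−`. -/
structure UState (r N : ℕ) (lam : Fin r → ℕ) where
  V : Fin (r + 1) → Fin (N + 1) → Bool
  H : Fin r → Fin (N + 2) → Bool
  top : ∀ j : Fin (N + 1), V 0 j = true ↔ ∃ i : Fin r, (j : ℕ) = lam i + (r - 1 - (i : ℕ))
  bottom : ∀ j, V (Fin.last r) j = false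
  left : ∀ i, H i 0 = false
  right : ∀ i, H i (Fin.last (N + 1)) = true
  adm : ∀ (i : Fin r) (j : Fin (N + 1)),
    admU (H i ⟨N - (j : ℕ), by omega⟩) (V i.castSucc j)
      (H i ⟨N - (j : ℕ) + 1, by omega⟩) (V i.succ j)

/-- The Boltzmann weight of a state: a vertex in row `i` contributes `z_i` exactly
when the spin on the edge to its left is `−`, otherwise `1`. -/
noncomputable def uweight {r N : ℕ} {lam : Fin r → ℕ} (s : UState r N lam) : LP r :=
  ∏ i : Fin r, ∏ k : Fin (N + 1),
    if s.H i k.castSucc then mono (Pi.single i 1) else 1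

/-- The partition function of the uncolored five-vertex model. -/
noncomputable def Zpart (r N : ℕ) (lam : Fin r → ℕ) : LP r :=
  ∑ᶠ s : UState r N lam, uweight s

/-- The Weyl vector `ρ = (r-1, r-2, …, 0)`. -/
def rhoWt (r : ℕ) : Fin r → ℤ := fun i => ((r - 1 - (i : ℕ) : ℕ) : ℤ)

/-- The Schur polynomial `s_λ(z_1, …, z_r)` as a Laurent polynomial, via its
combinatorial definition: the sum of `z^{wt T}` over semistandard Young tableaux of
shape `λ` with entries in `{1, …, r}` (0-based: entries `< r`). -/
noncomputable def schurL (r : ℕ) (μ : YoungDiagram) : LP r :=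
  ∑ᶠ T : {T : SemistandardYoungTableau μ // ∀ c ∈ μ.cells, T.1 c.1 c.2 < r},
    mono fun i => (wtT T.1 (i : ℕ) : ℤ)

/-- Colored spins: `none` is the spin `+`, and `some c` is a `−` spin carrying the
colour `c_{c+1}` (0-based `c`); the colours are ordered `c_1 > c_2 > ⋯ > c_r`, so a
*smaller* index means a *larger* colour.  Admissible colored configurations
`(left, top, right, bottom)`: type `a₁` (all `+`); type `a₂` (left and top colored,
the larger colour exits right and the smaller colour exits bottom — in indices,
right is the `min` and bottom is the `max`); types `b₂`/`c₁` (colored path entering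
on the left and exiting right or bottom); type `c₂` (entering on top and exiting
right).  The type-`b₁` configuration (entering on top and exiting bottom with `+`
horizontally) is forbidden, as is everything else. -/
def admC (r : ℕ) (a b c d : Option (Fin r)) : Prop :=
  (a = none ∧ b = none ∧ c = none ∧ d = none) ∨
  (∃ x y : Fin r, a = some x ∧ b = some y ∧ c = some (min x y) ∧ d = some (max x y)) ∨
  (∃ x : Fin r, a = some x ∧ b = none ∧
    ((c = some x ∧ d = none) ∨ (c = none ∧ d = some x))) ∨
  (∃ x : Fin r, a = none ∧ b = some x ∧ c = some x ∧ d = none)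

/-- A state of the colored five-vertex model `S_{z,λ,w}`; grid coordinates as in the
uncolored model.  Boundary conditions: the top boundary carries colour `c_{i+1}`
(i.e. `some i`) exactly in the column labeled `λ_i + r - 1 - i` (0-based `i`); the
right boundary carries, from top to bottom, the colours `w c` (row `i` carries
`some (w⁻¹ i)`); all other boundary edges are `+`. -/
structure CState (r N : ℕ) (lam : Fin r → ℕ) (w : Equiv.Perm (Fin r)) where
  V : Fin (r + 1) → Fin (N + 1) → Option (Fin r)
  H : Fin r → Fin (N + 2) → Option (Fin r)
  top : ∀ (i : Fin r) (j : Fin (N + 1)),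
    V 0 j = some i ↔ (j : ℕ) = lam i + (r - 1 - (i : ℕ))
  bottom : ∀ j, V (Fin.last r) j = none
  left : ∀ i, H i 0 = none
  right : ∀ i : Fin r, H i (Fin.last (N + 1)) = some (w⁻¹ i)
  adm : ∀ (i : Fin r) (j : Fin (N + 1)),
    admC r (H i ⟨N - (j : ℕ), by omega⟩) (V i.castSucc j)
      (H i ⟨N - (j : ℕ) + 1, by omega⟩) (V i.succ j)

/-- The Boltzmann weight of a colored state: a vertex in row `i` contributes `z_i`
exactly when the edge to its left is colored, otherwise `1`. -/
noncomputable def cweight {r N : ℕ} {lam : Fin r → ℕ} {w : Equiv.Perm (Fin r)}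
    (s : CState r N lam w) : LP r :=
  ∏ i : Fin r, ∏ k : Fin (N + 1),
    if (s.H i k.castSucc).isSome then mono (Pi.single i 1) else 1

/-- The partition function of the colored five-vertex model `S_{z,λ,w}`. -/
noncomputable def Zcol (r N : ℕ) (lam : Fin r → ℕ) (w : Equiv.Perm (Fin r)) : LP r :=
  ∑ᶠ s : CState r N lam w, cweight s

/-- The colored state `sc` projects to the uncolored state `s` upon forgetting the
colours (a colored spin becomes `−`, i.e. `true`). -/
def Uncolors {r N : ℕ} {lam : Fin r → ℕ} {w : Equiv.Perm (Fin r)}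
    (sc : CState r N lam w) (s : UState r N lam) : Prop :=
  (∀ i j, (sc.V i j).isSome = s.V i j) ∧ (∀ i k, (sc.H i k).isSome = s.H i k)

/-
The colours are forced row by row, from left to right. At an admissible coloured vertex the
colours leaving to the right and to the bottom are determined by the colours entering from the
left and from the top together with the uncoloured spin of the right edge, and every uncoloured
admissible vertex lifts in this way. Starting from the top boundary colours (distinct columns
since `λ` is a partition) this produces the unique colouring of an uncoloured state. Colours are
conserved at each vertex, so each colour, entering once at the top and never leaving at the
bottom, leaves exactly once on the right: the right boundary reads `w c` for a unique
permutation `w`. Forgetting colours is therefore a weight-preserving bijection from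
`Σ w, S_{z,λ,w}` onto `S_{z,λ}`.
-/

theorem Fin.add_sum_eq_sum_add_last {M : Type*} [AddCancelCommMonoid M] {n : ℕ}
    {f : Fin (n + 1) → M} {a b : Fin n → M}
    (h : ∀ i : Fin n, f i.castSucc + a i = f i.succ + b i) :
    f 0 + ∑ i, a i = ∑ i, b i + f (Fin.last n) := by
  have hsum : ∑ i : Fin n, f i.castSucc + ∑ i, a i = ∑ i : Fin n, f i.succ + ∑ i, b i := by
    simp only [← Finset.sum_add_distrib, h]
  apply add_right_cancel (b := ∑ i : Fin n, f i.castSucc)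
  calc f 0 + ∑ i, a i + ∑ i : Fin n, f i.castSucc
        = f 0 + (∑ i : Fin n, f i.succ + ∑ i, b i) := by rw [← hsum]; abel
    _ = (∑ i : Fin n, f i.castSucc + f (Fin.last n)) + ∑ i, b i := by
        rw [← Fin.sum_univ_castSucc, Fin.sum_univ_succ]; abel
    _ = ∑ i, b i + f (Fin.last n) + ∑ i : Fin n, f i.castSucc := by abel

theorem Fin.castSucc_rev_eq_mk {N : ℕ} (j : Fin (N + 1)) :
    j.rev.castSucc = (⟨N - j, by omega⟩ : Fin (N + 2)) := by
  ext; simp [Fin.val_rev]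

theorem Fin.succ_rev_eq_mk {N : ℕ} (j : Fin (N + 1)) :
    j.rev.succ = (⟨N - j + 1, by omega⟩ : Fin (N + 2)) := by
  ext; simp [Fin.val_rev]

section Vertex

variable {r : ℕ}

/-- The colours leaving a coloured vertex to the right and to the bottom, given the colours
entering from the left and from the top and the uncoloured spin `sp` of the right edge. -/
def outRight : Option (Fin r) → Option (Fin r) → Bool → Option (Fin r)
  | some x, some y, _ => some (min x y)
  | some x, none, sp => if sp then some x else none
  | none, b, _ => b

def outBottom : Option (Fin r) → Option (Fin r) → Bool → Option (Fin r)
  | some x, some y, _ => some (max x y)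
  | some x, none, sp => if sp then none else some x
  | none, _, _ => none

def countColor (x : Fin r) (a : Option (Fin r)) : ℕ := if a = some x then 1 else 0

theorem admC_outRight_outBottom (a b : Option (Fin r)) (sp : Bool) :
    admC r a b (outRight a b sp) (outBottom a b sp) := by
  cases a <;> cases b <;> cases sp <;> simp [admC, outRight, outBottom]

theorem admC.eq_outRight_outBottom {a b c d : Option (Fin r)} (h : admC r a b c d) :
    c = outRight a b c.isSome ∧ d = outBottom a b c.isSome := by
  rcases h with ⟨rfl, rfl, rfl, rfl⟩ | ⟨x, y, rfl, rfl, rfl, rfl⟩ |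
    ⟨x, rfl, rfl, ⟨rfl, rfl⟩ | ⟨rfl, rfl⟩⟩ | ⟨x, rfl, rfl, rfl, rfl⟩ <;>
    simp [outRight, outBottom]

theorem admC.admU_isSome {a b c d : Option (Fin r)} (h : admC r a b c d) :
    admU a.isSome b.isSome c.isSome d.isSome := by
  rcases h with ⟨rfl, rfl, rfl, rfl⟩ | ⟨x, y, rfl, rfl, rfl, rfl⟩ |
    ⟨x, rfl, rfl, ⟨rfl, rfl⟩ | ⟨rfl, rfl⟩⟩ | ⟨x, rfl, rfl, rfl, rfl⟩ <;>
    simp [admU]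

theorem isSome_outRight_outBottom {a b : Option (Fin r)} {sp sb : Bool}
    (h : admU a.isSome b.isSome sp sb) :
    (outRight a b sp).isSome = sp ∧ (outBottom a b sp).isSome = sb := by
  obtain ⟨hcount, hb₁⟩ := h
  cases a <;> cases b <;> cases sp <;> cases sb <;> simp_all [outRight, outBottom]

theorem countColor_add_countColor_outRight_outBottom (x : Fin r) (a b : Option (Fin r))
    (sp : Bool) :
    countColor x a + countColor x b =
      countColor x (outRight a b sp) + countColor x (outBottom a b sp) := by
  rcases a with _ | u <;> rcases b with _ | v
  · simp [outRight, outBottom]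
  · simp [outRight, outBottom, add_comm]
  · cases sp <;> simp [outRight, outBottom, add_comm]
  · simp only [outRight, outBottom, countColor, Option.some.injEq]
    rcases le_total u v with huv | hvu
    · rw [min_eq_left huv, max_eq_right huv]
    · rw [min_eq_right hvu, max_eq_left hvu, add_comm]

end Vertex

section Row

variable {r N : ℕ} (t : Fin (N + 1) → Option (Fin r)) (h : Fin (N + 2) → Bool)

/-- The colours on the horizontal edges of a row with top colours `t` (indexed by column
labels, which run from right to left) and uncoloured horizontal spins `h` (indexed from the
left), propagated from the left boundary; the vertex in column `j` sits between the horizontal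
edges `j.rev.castSucc` and `j.rev.succ`. -/
def rowH : Fin (N + 2) → Option (Fin r) :=
  Fin.induction none fun k c => outRight c (t k.rev) (h k.succ)

def rowV (j : Fin (N + 1)) : Option (Fin r) :=
  outBottom (rowH t h j.rev.castSucc) (t j) (h j.rev.succ)

@[simp]
theorem rowH_zero : rowH t h 0 = none := rfl

theorem rowH_succ (k : Fin (N + 1)) :
    rowH t h k.succ = outRight (rowH t h k.castSucc) (t k.rev) (h k.succ) :=
  Fin.induction_succ _ _ k

theorem rowH_rev_succ (j : Fin (N + 1)) :
    rowH t h j.rev.succ = outRight (rowH t h j.rev.castSucc) (t j) (h j.rev.succ) := by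
  rw [rowH_succ, Fin.rev_rev]

theorem admC_rowH_rowV (j : Fin (N + 1)) :
    admC r (rowH t h j.rev.castSucc) (t j) (rowH t h j.rev.succ) (rowV t h j) := by
  rw [rowH_rev_succ]
  exact admC_outRight_outBottom _ _ _

variable {t h}

theorem isSome_rowH {b : Fin (N + 1) → Bool} (hleft : h 0 = false)
    (hadm : ∀ j, admU (h j.rev.castSucc) (t j).isSome (h j.rev.succ) (b j)) (k : Fin (N + 2)) :
    (rowH t h k).isSome = h k := by
  induction k using Fin.induction with
  | zero => simp [hleft]
  | succ k ih =>
    rw [rowH_succ]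
    exact (isSome_outRight_outBottom (ih ▸ Fin.rev_rev k ▸ hadm k.rev)).1

theorem isSome_rowV {b : Fin (N + 1) → Bool} (hleft : h 0 = false)
    (hadm : ∀ j, admU (h j.rev.castSucc) (t j).isSome (h j.rev.succ) (b j)) (j : Fin (N + 1)) :
    (rowV t h j).isSome = b j :=
  (isSome_outRight_outBottom (isSome_rowH hleft hadm j.rev.castSucc ▸ hadm j)).2

theorem eq_rowH_rowV_of_admC {H : Fin (N + 2) → Option (Fin r)}
    {V : Fin (N + 1) → Option (Fin r)}
    (hleft : H 0 = none) (hadm : ∀ j, admC r (H j.rev.castSucc) (t j) (H j.rev.succ) (V j)) :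
    H = rowH t (fun k => (H k).isSome) ∧ V = rowV t (fun k => (H k).isSome) := by
  have hH : H = rowH t (fun k => (H k).isSome) := by
    funext k
    induction k using Fin.induction with
    | zero => exact hleft
    | succ k ih =>
      have hk := (hadm k.rev).eq_outRight_outBottom.1
      rw [Fin.rev_rev, ih] at hk
      rw [hk, rowH_succ]
  refine ⟨hH, funext fun j => ?_⟩
  rw [rowV, ← congrFun hH j.rev.castSucc]
  exact (hadm j).eq_outRight_outBottom.2

variable (t h)

theorem sum_countColor_eq_rowH_last_add (x : Fin r) :
    ∑ j, countColor x (t j) =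
      countColor x (rowH t h (Fin.last _)) + ∑ j, countColor x (rowV t h j) := by
  have hstep : ∀ k : Fin (N + 1), countColor x (rowH t h k.castSucc) + countColor x (t k.rev) =
      countColor x (rowH t h k.succ) + countColor x (rowV t h k.rev) := fun k => by
    simpa [rowH_succ, rowV] using
      countColor_add_countColor_outRight_outBottom x (rowH t h k.castSucc) (t k.rev) (h k.succ)
  have := Fin.add_sum_eq_sum_add_last (f := fun k => countColor x (rowH t h k))
    (a := fun k => countColor x (t k.rev)) (b := fun k => countColor x (rowV t h k.rev)) hstep
  rw [rowH_zero, show countColor x none = 0 from rfl, zero_add] at this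
  rw [← Equiv.sum_comp Fin.revPerm,
    ← Equiv.sum_comp Fin.revPerm (fun j => countColor x (rowV t h j))]
  exact this.trans (add_comm _ _)

end Row

section TopBoundary

variable {r N : ℕ} {lam : Fin r → ℕ}

theorem strictAnti_column (hlam : Antitone lam) :
    StrictAnti fun i : Fin r => lam i + (r - 1 - (i : ℕ)) := fun i j hij => by
  have hji := hlam hij.le
  have hij' : (i : ℕ) < j := hij
  have hj := j.isLt
  dsimp only
  omega

variable (r N lam) in
noncomputable def topColor (j : Fin (N + 1)) : Option (Fin r) :=
  if h : ∃ i : Fin r, (j : ℕ) = lam i + (r - 1 - (i : ℕ)) then some h.choose else none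

theorem isSome_topColor_iff {j : Fin (N + 1)} :
    (topColor r N lam j).isSome ↔ ∃ i : Fin r, (j : ℕ) = lam i + (r - 1 - (i : ℕ)) := by
  unfold topColor
  split_ifs with h <;> simpa using h

theorem topColor_eq_some_iff (hlam : Antitone lam) {j : Fin (N + 1)} {i : Fin r} :
    topColor r N lam j = some i ↔ (j : ℕ) = lam i + (r - 1 - (i : ℕ)) := by
  unfold topColor
  split_ifs with h
  · rw [Option.some_inj]
    constructor
    · rintro rfl; exact h.choose_spec
    · exact fun hj => (strictAnti_column hlam).injective (h.choose_spec.symm.trans hj)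
  · simpa using fun hj => h ⟨i, hj⟩

theorem sum_countColor_topColor (hlam : Antitone lam) {x : Fin r}
    (hx : lam x + (r - 1 - (x : ℕ)) ≤ N) :
    ∑ j, countColor x (topColor r N lam j) = 1 := by
  let j₀ : Fin (N + 1) := ⟨lam x + (r - 1 - (x : ℕ)), by omega⟩
  have hcount : ∀ j, countColor x (topColor r N lam j) = if j₀ = j then 1 else 0 := fun j => by
    simp only [countColor, topColor_eq_some_iff hlam, j₀, Fin.ext_iff, eq_comm]
  simp [hcount]

end TopBoundary

section States

variable {r N : ℕ} {lam : Fin r → ℕ} {w : Equiv.Perm (Fin r)}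

theorem UState.ext {s s' : UState r N lam} (hV : s.V = s'.V) (hH : s.H = s'.H) : s = s' := by
  cases s; cases s'; congr

theorem CState.ext {c c' : CState r N lam w} (hV : c.V = c'.V) (hH : c.H = c'.H) : c = c' := by
  cases c; cases c'; congr

instance : Finite (UState r N lam) :=
  Finite.of_injective (fun s => (s.V, s.H)) fun _ _ h =>
    UState.ext (Prod.ext_iff.1 h).1 (Prod.ext_iff.1 h).2

instance : Finite (CState r N lam w) :=
  Finite.of_injective (fun c => (c.V, c.H)) fun _ _ h =>
    CState.ext (Prod.ext_iff.1 h).1 (Prod.ext_iff.1 h).2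

noncomputable instance : Fintype (UState r N lam) := Fintype.ofFinite _

noncomputable instance : Fintype (CState r N lam w) := Fintype.ofFinite _

theorem UState.adm_rev (s : UState r N lam) (i : Fin r) (j : Fin (N + 1)) :
    admU (s.H i j.rev.castSucc) (s.V i.castSucc j) (s.H i j.rev.succ) (s.V i.succ j) := by
  rw [Fin.castSucc_rev_eq_mk, Fin.succ_rev_eq_mk]
  exact s.adm i j

theorem CState.adm_rev (c : CState r N lam w) (i : Fin r) (j : Fin (N + 1)) :
    admC r (c.H i j.rev.castSucc) (c.V i.castSucc j) (c.H i j.rev.succ) (c.V i.succ j) := by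
  rw [Fin.castSucc_rev_eq_mk, Fin.succ_rev_eq_mk]
  exact c.adm i j

def CState.uncolor (c : CState r N lam w) : UState r N lam where
  V i j := (c.V i j).isSome
  H i k := (c.H i k).isSome
  top j := by simp only [Option.isSome_iff_exists, c.top]
  bottom j := by simp [c.bottom]
  left i := by simp [c.left]
  right i := by simp [c.right]
  adm i j := (c.adm i j).admU_isSome

theorem uncolors_iff {c : CState r N lam w} {s : UState r N lam} :
    Uncolors c s ↔ c.uncolor = s := by
  constructor
  · rintro ⟨hV, hH⟩
    exact UState.ext (funext₂ hV) (funext₂ hH)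
  · rintro rfl
    exact ⟨fun _ _ => rfl, fun _ _ => rfl⟩

theorem uweight_uncolor (c : CState r N lam w) : uweight c.uncolor = cweight c := rfl

end States

namespace UState

variable {r N : ℕ} {lam : Fin r → ℕ} (s : UState r N lam)

noncomputable def colV : Fin (r + 1) → Fin (N + 1) → Option (Fin r) :=
  Fin.induction (topColor r N lam) fun i v => rowV v (s.H i)

noncomputable def colH (i : Fin r) : Fin (N + 2) → Option (Fin r) :=
  rowH (s.colV i.castSucc) (s.H i)

@[simp]
theorem colV_zero : s.colV 0 = topColor r N lam := rfl

theorem colV_succ (i : Fin r) : s.colV i.succ = rowV (s.colV i.castSucc) (s.H i) :=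
  Fin.induction_succ _ _ i

theorem isSome_colV (i : Fin (r + 1)) (j : Fin (N + 1)) : (s.colV i j).isSome = s.V i j := by
  induction i using Fin.induction generalizing j with
  | zero => rw [colV_zero, Bool.eq_iff_iff, isSome_topColor_iff, s.top]
  | succ i ih =>
    rw [colV_succ]
    exact isSome_rowV (s.left i) (fun j => by rw [ih]; exact s.adm_rev i j) j

theorem isSome_colH (i : Fin r) (k : Fin (N + 2)) : (s.colH i k).isSome = s.H i k :=
  isSome_rowH (s.left i) (fun j => by rw [isSome_colV]; exact s.adm_rev i j) k

theorem colV_last (j : Fin (N + 1)) : s.colV (Fin.last r) j = none := by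
  simpa [s.bottom] using s.isSome_colV (Fin.last r) j

theorem sum_countColor_colH_last (hlam : Antitone lam)
    (hN : ∀ i : Fin r, lam i + (r - 1 - (i : ℕ)) ≤ N) (x : Fin r) :
    ∑ i, countColor x (s.colH i (Fin.last _)) = 1 := by
  have hstep : ∀ i : Fin r, ∑ j, countColor x (s.colV i.castSucc j) + 0 =
      ∑ j, countColor x (s.colV i.succ j) + countColor x (s.colH i (Fin.last _)) := fun i => by
    rw [add_zero, colV_succ]
    exact (sum_countColor_eq_rowH_last_add _ _ x).trans (add_comm _ _)
  have := Fin.add_sum_eq_sum_add_last (f := fun i => ∑ j, countColor x (s.colV i j)) hstep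
  simp only [colV_zero, colV_last, sum_countColor_topColor hlam (hN x)] at this
  simpa [countColor] using this.symm

theorem exists_colH_last_eq_some (hlam : Antitone lam)
    (hN : ∀ i : Fin r, lam i + (r - 1 - (i : ℕ)) ≤ N) (x : Fin r) :
    ∃ i, s.colH i (Fin.last _) = some x := by
  obtain ⟨i, -, hi⟩ := Finset.exists_ne_zero_of_sum_ne_zero
    ((s.sum_countColor_colH_last hlam hN x).symm ▸ one_ne_zero)
  exact ⟨i, by simpa [countColor] using hi⟩

theorem exists_cState_uncolor_eq (hlam : Antitone lam)
    (hN : ∀ i : Fin r, lam i + (r - 1 - (i : ℕ)) ≤ N) :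
    ∃ (w : Equiv.Perm (Fin r)) (c : CState r N lam w), c.uncolor = s := by
  have hsome (i : Fin r) : (s.colH i (Fin.last _)).isSome := by rw [isSome_colH, s.right]
  let g (i : Fin r) : Fin r := (s.colH i (Fin.last _)).get (hsome i)
  have hg (i : Fin r) : s.colH i (Fin.last _) = some (g i) := (Option.some_get _).symm
  have hbij : g.Bijective := Finite.surjective_iff_bijective.1 fun x => by
    obtain ⟨i, hi⟩ := s.exists_colH_last_eq_some hlam hN x
    exact ⟨i, Option.some_injective _ ((hg i).symm.trans hi)⟩
  refine ⟨(Equiv.ofBijective g hbij)⁻¹,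
    { V := s.colV
      H := s.colH
      top := fun i j => topColor_eq_some_iff hlam
      bottom := s.colV_last
      left := fun i => rowH_zero _ _
      right := fun i => by rw [inv_inv]; exact hg i
      adm := fun i j => by
        rw [← Fin.castSucc_rev_eq_mk, ← Fin.succ_rev_eq_mk, colV_succ]
        exact admC_rowH_rowV _ _ j },
    UState.ext (funext₂ s.isSome_colV) (funext₂ s.isSome_colH)⟩

end UState

namespace CState

variable {r N : ℕ} {lam : Fin r → ℕ} {w : Equiv.Perm (Fin r)} (c : CState r N lam w)

theorem colV_uncolor (hlam : Antitone lam) : c.uncolor.colV = c.V := by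
  funext i
  induction i using Fin.induction with
  | zero =>
    funext j
    cases hc : c.V 0 j with
    | none => simpa [uncolor, hc] using c.uncolor.isSome_colV 0 j
    | some i => exact (topColor_eq_some_iff hlam).2 ((c.top i j).1 hc)
  | succ i ih =>
    rw [UState.colV_succ, ih]
    exact (eq_rowH_rowV_of_admC (c.left i) (c.adm_rev i)).2.symm

theorem colH_uncolor (hlam : Antitone lam) (i : Fin r) :
    c.uncolor.colH i = c.H i := by
  rw [UState.colH, c.colV_uncolor hlam]
  exact (eq_rowH_rowV_of_admC (c.left i) (c.adm_rev i)).1.symm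

end CState

theorem uncolor_injective {r N : ℕ} {lam : Fin r → ℕ} (hlam : Antitone lam) :
    Function.Injective fun p : (w : Equiv.Perm (Fin r)) × CState r N lam w => p.2.uncolor := by
  rintro ⟨w, c⟩ ⟨w', c'⟩ (h : c.uncolor = c'.uncolor)
  have hV : c.V = c'.V := by rw [← c.colV_uncolor hlam, h, c'.colV_uncolor hlam]
  have hH : c.H = c'.H := funext fun i => by
    rw [← c.colH_uncolor hlam, h, c'.colH_uncolor hlam]
  obtain rfl : w = w' := inv_injective <| Equiv.ext fun i =>
    Option.some_injective _ <| by rw [← c.right, ← c'.right, hH]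
  rw [CState.ext hV hH]

theorem uncolor_surjective {r N : ℕ} {lam : Fin r → ℕ} (hlam : Antitone lam)
    (hN : ∀ i : Fin r, lam i + (r - 1 - (i : ℕ)) ≤ N) :
    Function.Surjective fun p : (w : Equiv.Perm (Fin r)) × CState r N lam w => p.2.uncolor :=
  fun s => by
    obtain ⟨w, c, hc⟩ := s.exists_cState_uncolor_eq hlam hN
    exact ⟨⟨w, c⟩, hc⟩

/-- In any state of the colored five-vertex model, the colouring is uniquely
determined by the uncolored state: given an admissible uncolored state (with the
prescribed top boundary colours), there is exactly one pair `(w, colored state)`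
projecting to it.  Consequently the uncolored ensemble decomposes as the disjoint
union of the colored ensembles over `w ∈ S_r`, and
`Z(S_{z,λ}) = Σ_{w ∈ S_r} Z(S_{z,λ,w})`. -/
theorem colored_decomposition (r N : ℕ) (hr : 0 < r) (lam : Fin r → ℕ)
    (hdom : ∀ i j : Fin r, i ≤ j → lam j ≤ lam i) (hN : lam ⟨0, hr⟩ + r - 1 ≤ N) :
    (∀ s : UState r N lam,
      ∃! p : (w : Equiv.Perm (Fin r)) × CState r N lam w, Uncolors p.2 s) ∧
    Zpart r N lam = ∑ w : Equiv.Perm (Fin r), Zcol r N lam w := by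
  have hcolumns (i : Fin r) : lam i + (r - 1 - (i : ℕ)) ≤ N := by
    have := hdom ⟨0, hr⟩ i (Nat.zero_le _)
    omega
  have hbij : Function.Bijective
      fun p : (w : Equiv.Perm (Fin r)) × CState r N lam w => p.2.uncolor :=
    ⟨uncolor_injective hdom, uncolor_surjective hdom hcolumns⟩
  refine ⟨fun s => ?_, ?_⟩
  · simpa only [uncolors_iff] using (Function.bijective_iff_existsUnique _).1 hbij s
  · simp only [Zpart, Zcol, finsum_eq_sum_of_fintype]
    rw [← Fintype.sum_sigma fun p => cweight p.2]
    exact (Fintype.sum_bijective _ hbij _ _ fun p => uweight_uncolor p.2).symm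
end
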